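/- arXiv:2405.18678 — 2 statements merged into one kernel-verified Lean document; each statement's English description precedes it below -/
import Mathlib

section
/- Let G be a finite group and p a prime with ε_p(G) = m. Then every p-element of G/Z(G) has order dividing p^m; equivalently, the exponent of a Sylow p-subgroup of G/Z(G) divides p^m. -/
/-!
Write `m = εₚ(G)`. Lifting a `p`-element of `G ⧸ Z(G)` to the `p`-part of a preimage, it suffices to
show that `x ^ p ^ m` is central for every `p`-element `x` of `G`. If `z = x ^ p ^ m` were not
central, then, a finite group not being the union of the conjugates of the proper subgroup
`C_G(z)`, some `g` has no conjugate commuting with `z`. Then `z` fixes no coset of `C_G(g)`, so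
every `⟨x⟩`-orbit on `G ⧸ C_G(g)` has `p`-power length larger than `p ^ m`, and
`p ^ (m + 1) ∣ |G : C_G(g)|`, contradicting the definition of `m`.
-/

/-- `εₚ(G)`: the largest `p`-exponent of a conjugacy class size
(equivalently, of the index of a centralizer) in `G`. -/
noncomputable def epsP (p : ℕ) (G : Type*) [Group G] : ℕ :=
  sSup {k | ∃ x : G, ((Subgroup.centralizer {x}).index).factorization p = k}

theorem Nat.pow_succ_dvd_of_dvd_pow_of_not_dvd_pow {p n j m : ℕ} (hp : p.Prime)
    (hj : n ∣ p ^ j) (hm : ¬ n ∣ p ^ m) : p ^ (m + 1) ∣ n := by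
  obtain ⟨t, -, rfl⟩ := (Nat.dvd_prime_pow hp).1 hj
  exact pow_dvd_pow p (by_contra fun ht => hm (pow_dvd_pow p (by omega)))

namespace MulAction

open Subgroup

variable {G X : Type*} [Group G] [MulAction G X] [Finite X]

theorem dvd_card_of_forall_dvd_card_orbit {d : ℕ} (h : ∀ q : X, d ∣ Nat.card (orbit G q)) :
    d ∣ Nat.card X := by
  have := Fintype.ofFinite (orbitRel.Quotient G X)
  rw [Nat.card_congr (selfEquivSigmaOrbits G X), Nat.card_sigma]
  exact Finset.dvd_sum fun ω _ => h ω.out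

theorem pow_succ_dvd_card_of_forall_pow_smul_ne {p : ℕ} (hp : p.Prime) {x : G} {j m : ℕ}
    (hx : x ^ p ^ j = 1) (h : ∀ q : X, x ^ p ^ m • q ≠ q) : p ^ (m + 1) ∣ Nat.card X := by
  refine dvd_card_of_forall_dvd_card_orbit (G := zpowers x) fun q => ?_
  have := Fintype.ofFinite (orbit (zpowers x) q)
  rw [Nat.card_eq_fintype_card, ← minimalPeriod_eq_card]
  refine Nat.pow_succ_dvd_of_dvd_pow_of_not_dvd_pow (j := j) hp ?_ ?_
  · exact pow_smul_eq_iff_minimalPeriod_dvd.mp (by rw [hx, one_smul])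
  · exact fun hd => h q (pow_smul_eq_iff_minimalPeriod_dvd.mpr hd)

end MulAction

section

open MulAction Subgroup

variable {G : Type*} [Group G]

theorem QuotientGroup.smul_mk_eq_self_iff {H : Subgroup G} {g h : G} :
    g • (h : G ⧸ H) = h ↔ h⁻¹ * g * h ∈ H := by
  rw [MulAction.Quotient.smul_mk, QuotientGroup.eq, ← H.inv_mem_iff]
  simp [mul_assoc]

theorem Subgroup.exists_forall_conj_notMem_of_ne_top [Finite G] {H : Subgroup G} (hH : H ≠ ⊤) :
    ∃ g : G, ∀ h : G, h⁻¹ * g * h ∉ H := by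
  -- Burnside: the fixed-point counts average to the number of orbits, `1`, yet none is `0`
  -- and the identity fixes all `|G : H| > 1` cosets.
  classical
  have := Fintype.ofFinite G
  have := Fintype.ofFinite (G ⧸ H)
  by_contra! hfix
  have hpos (g : G) : 1 ≤ Fintype.card (fixedBy (G ⧸ H) g) := by
    obtain ⟨h, hh⟩ := hfix g
    exact Fintype.card_pos_iff.mpr ⟨⟨h, QuotientGroup.smul_mk_eq_self_iff.mpr hh⟩⟩
  have hone : 1 < Fintype.card (fixedBy (G ⧸ H) (1 : G)) := by
    simpa [fixedBy_one_eq_univ, ← Nat.card_eq_fintype_card, ← index_eq_card]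
      using one_lt_index_of_ne_top hH
  have horbits : Fintype.card (orbitRel.Quotient G (G ⧸ H)) = 1 :=
    le_antisymm (Fintype.card_le_one_iff_subsingleton.mpr
      ((pretransitive_iff_subsingleton_quotient G _).mp inferInstance)) Fintype.card_pos
  have := Finset.sum_lt_sum (s := Finset.univ) (fun g _ => hpos g) ⟨1, Finset.mem_univ _, hone⟩
  rw [sum_card_fixedBy_eq_card_orbits_mul_card_group, horbits] at this
  simp at this

theorem conj_mem_centralizer_singleton_iff {g z h : G} :
    h⁻¹ * z * h ∈ centralizer {g} ↔ h * g * h⁻¹ ∈ centralizer {z} := by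
  rw [mem_centralizer_singleton_iff, mem_centralizer_singleton_iff]
  change Commute (h⁻¹ * z * h) g ↔ Commute (h * g * h⁻¹) z
  rw [← Commute.conj_iff h, Commute.symm_iff]
  simp [mul_assoc]

theorem factorization_index_centralizer_le_epsP [Finite G] (p : ℕ) (g : G) :
    (centralizer {g}).index.factorization p ≤ epsP p G := by
  refine le_csSup ⟨(Nat.card G).factorization p, ?_⟩ ⟨g, rfl⟩
  rintro _ ⟨x, rfl⟩
  exact (Nat.factorization_le_iff_dvd index_ne_zero_of_finite Nat.card_pos.ne').2
    (index_dvd_card _) p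

theorem pow_prime_pow_epsP_mem_center [Finite G] {p : ℕ} (hp : p.Prime) {x : G} {j : ℕ}
    (hx : x ^ p ^ j = 1) : x ^ p ^ epsP p G ∈ center G := by
  by_contra hz
  have hne : centralizer {x ^ p ^ epsP p G} ≠ ⊤ := fun h =>
    hz (centralizer_eq_top_iff_subset.mp h rfl)
  obtain ⟨g, hg⟩ := exists_forall_conj_notMem_of_ne_top hne
  have hfree (q : G ⧸ centralizer {g}) : x ^ p ^ epsP p G • q ≠ q := by
    obtain ⟨h, rfl⟩ := QuotientGroup.mk_surjective q
    rw [Ne, QuotientGroup.smul_mk_eq_self_iff, conj_mem_centralizer_singleton_iff]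
    simpa using hg h⁻¹
  have hdvd := pow_succ_dvd_card_of_forall_pow_smul_ne hp hx hfree
  rw [← index_eq_card, hp.pow_dvd_iff_le_factorization index_ne_zero_of_finite] at hdvd
  have := factorization_index_centralizer_le_epsP p g
  omega

end

theorem orderOf_pElement_quotient_center_dvd {G : Type*} [Group G] [Finite G]
    (p : ℕ) [Fact p.Prime] (m : ℕ) (hm : epsP p G = m)
    (y : G ⧸ Subgroup.center G) (hy : ∃ k : ℕ, orderOf y = p ^ k) :
    orderOf y ∣ p ^ m := by
  obtain ⟨k, hk⟩ := hy
  obtain ⟨g, rfl⟩ := QuotientGroup.mk_surjective y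
  have hp : p.Prime := Fact.out
  set b := ordCompl[p] (orderOf g)
  have hcop : (orderOf (g : G ⧸ Subgroup.center G)).Coprime b :=
    hk ▸ (Nat.coprime_ordCompl hp (orderOf_pos g).ne').pow_left k
  have hpow : (g ^ b) ^ p ^ (orderOf g).factorization p = 1 := by
    rw [← pow_mul, mul_comm, Nat.ordProj_mul_ordCompl_eq_self, pow_orderOf_eq_one]
  have hcentral := hm ▸ pow_prime_pow_epsP_mem_center hp hpow
  rw [← hcop.orderOf_pow]
  exact orderOf_dvd_of_pow_eq_one ((QuotientGroup.eq_one_iff _).mpr (by simpa using hcentral))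
end

section
/- Let G be a finite π-separable group such that for every x ∈ G the index |G : C_G(x)| is coprime to every prime in π. Then G/Z(G) is a π'-group. -/
/-- `n` is a `π`-number: every prime divisor of `n` lies in `π`. -/
def IsPiNumber (π : Finset ℕ) (n : ℕ) : Prop := ∀ p : ℕ, p.Prime → p ∣ n → p ∈ π

/-- `n` is a `π'`-number: no prime divisor of `n` lies in `π`. -/
def IsPiPrimeNumber (π : Finset ℕ) (n : ℕ) : Prop := ∀ p : ℕ, p.Prime → p ∣ n → p ∉ π

/-- The `π`-exponent of `n`: the sum of the exponents of the primes of `π`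
in the factorization of `n` (so `p₁^{k₁}⋯p_s^{k_s}` is the `π`-part of `n`
and the `π`-exponent is `k₁ + ⋯ + k_s`). -/
def piExp (π : Finset ℕ) (n : ℕ) : ℕ :=
  ∑ p ∈ n.primeFactors.filter (· ∈ π), n.factorization p

/-- `ε_π(G)`: the largest `π`-exponent of a conjugacy class size in `G`. -/
noncomputable def epsPi (π : Finset ℕ) (G : Type*) [Group G] : ℕ :=
  sSup {k | ∃ x : G, piExp π (Subgroup.centralizer {x}).index = k}

/-- A group is `π`-separable if it has a normal series each of whose factors
is a `π`-group or a `π'`-group. -/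
def PiSeparable (π : Finset ℕ) (G : Type*) [Group G] : Prop :=
  ∃ (n : ℕ) (H : ℕ → Subgroup G), H 0 = ⊥ ∧ H n = ⊤ ∧
    (∀ i, H i ≤ H (i + 1)) ∧ (∀ i, (H i).Normal) ∧
    ∀ i < n,
      IsPiNumber π (Nat.card (↥(H (i + 1)) ⧸ (H i).subgroupOf (H (i + 1)))) ∨
      IsPiPrimeNumber π (Nat.card (↥(H (i + 1)) ⧸ (H i).subgroupOf (H (i + 1))))

/-!
Fix `p ∈ π` and a Sylow `p`-subgroup `P`. Since `p ∤ |G : C_G(x)|`, every `x` lies in the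
centralizer of some Sylow `p`-subgroup, that is, in a conjugate of `C_G(P)`. A finite group is
never the union of the conjugates of a proper subgroup, so `C_G(P) = G` and `P ≤ Z(G)`; hence
`p ∤ |G : Z(G)|`.
-/

open Subgroup MulAction

theorem Subgroup.eq_top_of_forall_exists_conj_mem {G : Type*} [Group G] [Finite G]
    (H : Subgroup G) (h : ∀ g : G, ∃ x : G, x⁻¹ * g * x ∈ H) : H = ⊤ := by
  classical
  cases nonempty_fintype G
  -- Burnside's lemma for `G` acting on `G ⧸ H`: the identity fixes `|G : H|` points and every
  -- other element fixes at least one, while the average number of fixed points is `1`.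
  have hfixed : ∀ g : G, 1 ≤ Fintype.card (fixedBy (G ⧸ H) g) := by
    intro g
    obtain ⟨x, hx⟩ := h g
    refine Fintype.card_pos_iff.mpr ⟨⟨(x : G ⧸ H), ?_⟩⟩
    rw [mem_fixedBy, eq_comm, MulAction.Quotient.smul_mk, QuotientGroup.eq, smul_eq_mul,
      ← mul_assoc]
    exact hx
  have hone : Fintype.card (fixedBy (G ⧸ H) (1 : G)) = H.index := by
    rw [← Nat.card_eq_fintype_card, fixedBy_one_eq_univ, Nat.card_univ, index]
  have hrest : Fintype.card G - 1 ≤ ∑ g ∈ Finset.univ.erase (1 : G),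
      Fintype.card (fixedBy (G ⧸ H) g) := by
    have := Finset.card_nsmul_le_sum _ _ 1 fun g (_ : g ∈ Finset.univ.erase (1 : G)) => hfixed g
    rwa [smul_eq_mul, mul_one, Finset.card_erase_of_mem (Finset.mem_univ 1),
      Finset.card_univ] at this
  have : Subsingleton (orbitRel.Quotient G (G ⧸ H)) :=
    (pretransitive_iff_subsingleton_quotient G (G ⧸ H)).mp inferInstance
  have hburnside := sum_card_fixedBy_eq_card_orbits_mul_card_group G (G ⧸ H)
  rw [Fintype.card_eq_one_iff_nonempty_unique.mpr ⟨Unique.mk' _⟩, one_mul,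
    ← Finset.add_sum_erase _ _ (Finset.mem_univ 1), hone] at hburnside
  have hG := Fintype.card_pos (α := G)
  have hH := H.index_ne_zero_of_finite
  exact index_eq_one.mp (by omega)

section Sylow

variable {G : Type*} [Group G] [Finite G] {p : ℕ} [Fact p.Prime]

theorem Sylow.exists_le_of_not_dvd_index {K : Subgroup G} (hK : ¬ p ∣ K.index) :
    ∃ P : Sylow p G, (P : Subgroup G) ≤ K := by
  obtain ⟨Q⟩ : Nonempty (Sylow p K) := inferInstance
  have hQ : ¬ p ∣ (Q.map K.subtype).index := by
    rw [index_map_subtype]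
    exact Nat.Prime.not_dvd_mul Fact.out Q.not_dvd_index hK
  exact ⟨(Q.2.map K.subtype).toSylow hQ, map_subtype_le _⟩

theorem Sylow.exists_conj_mem_centralizer (P : Sylow p G) {g : G}
    (hg : ¬ p ∣ (centralizer {g}).index) :
    ∃ x : G, x⁻¹ * g * x ∈ centralizer (P : Set G) := by
  obtain ⟨S, hS⟩ := Sylow.exists_le_of_not_dvd_index hg
  obtain ⟨x, rfl⟩ := MulAction.exists_smul_eq G P S
  refine ⟨x, fun y hy => ?_⟩
  have hxy : x * y * x⁻¹ ∈ centralizer {g} := by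
    apply hS
    rw [Sylow.coe_subgroup_smul]
    exact smul_mem_pointwise_smul y (MulAut.conj x) _ hy
  calc y * (x⁻¹ * g * x) = x⁻¹ * (x * y * x⁻¹ * g) * x := by group
    _ = x⁻¹ * (g * (x * y * x⁻¹)) * x := by rw [mem_centralizer_singleton_iff.mp hxy]
    _ = x⁻¹ * g * x * y := by group

theorem Sylow.le_center_of_forall_not_dvd_index (P : Sylow p G)
    (h : ∀ x : G, ¬ p ∣ (centralizer {x}).index) : (P : Subgroup G) ≤ center G :=
  centralizer_eq_top_iff_subset.mp <|
    eq_top_of_forall_exists_conj_mem _ fun g => P.exists_conj_mem_centralizer (h g)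

end Sylow

theorem quotient_center_isPiPrimeGroup_general {G : Type*} [Group G] [Finite G]
    (π : Finset ℕ)
    (h : ∀ x : G, ∀ p ∈ π, ¬ p ∣ (Subgroup.centralizer {x}).index) :
    IsPiPrimeNumber π (Nat.card (G ⧸ Subgroup.center G)) := by
  intro p hp hpdvd hpπ
  have : Fact p.Prime := ⟨hp⟩
  obtain ⟨P⟩ : Nonempty (Sylow p G) := inferInstance
  have hP : (P : Subgroup G) ≤ center G :=
    P.le_center_of_forall_not_dvd_index fun x => h x p hpπ
  exact P.not_dvd_index (hpdvd.trans (index_dvd_of_le hP))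

theorem quotient_center_isPiPrimeGroup {G : Type*} [Group G] [Finite G]
    (π : Finset ℕ) (hsep : PiSeparable π G)
    (h : ∀ x : G, ∀ p ∈ π, ¬ p ∣ (Subgroup.centralizer {x}).index) :
    IsPiPrimeNumber π (Nat.card (G ⧸ Subgroup.center G)) :=
  quotient_center_isPiPrimeGroup_general π h
end
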